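/- arXiv:2005.06138 — 3 statements merged into one kernel-verified Lean document; each statement's English description precedes it below -/
import Mathlib

section
/- Let D_X, D_Y ∈ ℝ^{N×n} be matrices whose row sets are partitioned (with overlaps allowed) among M agents as D_X^{(i)}, D_Y^{(i)} (pairing corresponding rows), such that every agent's data contains common 'signature' rows D_{X_s}, D_{Y_s}, where D_{X_s}·C has full column rank for a given full-column-rank C ∈ ℝ^{n×k}. If for every agent i there exists an invertible Kᵢ ∈ ℝ^{k×k} with D_Y^{(i)}·C = D_X^{(i)}·C·Kᵢ, then all the Kᵢ are equal to a common invertible K, and consequently D_Y·C = D_X·C·K, so range(D_X·C) = range(D_Y·C). -/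
/-- Signature data forces agreement: if every agent's local data satisfies
`D_Y^{(i)} C = D_X^{(i)} C Kᵢ` with invertible `Kᵢ`, the agents' rows cover all rows,
every agent holds the signature rows, and the signature part of `D_X C` has full
column rank, then all `Kᵢ` coincide with a common invertible `K` and
`D_Y C = D_X C K`, so the ranges coincide. -/
theorem stmt_11 (N n k Mn : ℕ) [NeZero Mn]
    (DX DY : Matrix (Fin N) (Fin n) ℝ)
    (R : Fin Mn → Set (Fin N)) (Rs : Set (Fin N))
    (hcover : ∀ r : Fin N, ∃ i, r ∈ R i)
    (hsig : ∀ i, Rs ⊆ R i)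
    (C : Matrix (Fin n) (Fin k) ℝ) (hC : Function.Injective C.mulVecLin)
    (hsigrank : ∀ v : Fin k → ℝ, (∀ r ∈ Rs, ((DX * C).mulVec v) r = 0) → v = 0)
    (K : Fin Mn → Matrix (Fin k) (Fin k) ℝ)
    (hK : ∀ i, IsUnit (K i))
    (heq : ∀ i, ∀ r ∈ R i, ∀ j, (DY * C) r j = ((DX * C) * K i) r j) :
    ∃ K' : Matrix (Fin k) (Fin k) ℝ, IsUnit K' ∧ (∀ i, K i = K') ∧
      DY * C = DX * C * K' ∧
      LinearMap.range (DX * C).mulVecLin = LinearMap.range (DY * C).mulVecLin := by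
  obtain ⟨i0⟩ := (inferInstance : Nonempty (Fin Mn))
  -- all K i agree
  have hagree : ∀ i, K i = K i0 := by
    intro i
    ext a b
    have hcol : (fun l => (K i - K i0) l b) = 0 := by
      apply hsigrank
      intro r hr
      have h1 := heq i r (hsig i hr) b
      have h2 := heq i0 r (hsig i0 hr) b
      have : ((DX * C) * K i) r b = ((DX * C) * K i0) r b := by rw [← h1, h2]
      simp only [Matrix.mulVec, dotProduct, Matrix.sub_apply, Matrix.mul_apply] at *
      simp [mul_sub, Finset.sum_sub_distrib, this]
    have := congrFun hcol a
    simpa [sub_eq_zero] using this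
  refine ⟨K i0, hK i0, hagree, ?_, ?_⟩
  · ext r j
    obtain ⟨i, hi⟩ := hcover r
    rw [heq i r hi j, hagree i]
  · have hKeq : DY * C = DX * C * K i0 := by
      ext r j
      obtain ⟨i, hi⟩ := hcover r
      rw [heq i r hi j, hagree i]
    rw [hKeq]
    obtain ⟨u, hu⟩ := hK i0
    ext x
    constructor
    · rintro ⟨v, rfl⟩
      exact ⟨(↑u⁻¹ : Matrix (Fin k) (Fin k) ℝ).mulVec v, by
        simp only [Matrix.mulVecLin_apply, Matrix.mulVec_mulVec, ← hu, Matrix.mul_assoc,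
          Units.mul_inv, Matrix.mul_one]⟩
    · rintro ⟨v, rfl⟩
      exact ⟨(K i0).mulVec v, by simp [Matrix.mulVecLin_apply, Matrix.mulVec_mulVec]⟩
end

section
/- Let D(X), D(Y) ∈ ℝ^{N×N_d} have full column rank and suppose S* ⊆ ℝ^{N_d} is the maximal subspace satisfying D(X)·S* = D(Y)·S* (image subspaces in ℝ^N). Then for a full column rank matrix C with range(C) = S*, there is a unique invertible K with D(Y)C = D(X)CK, and a vector v ∈ ℂ^{N_d} satisfies D(Y)v = λ·D(X)v for some λ ∈ ℂ if and only if v = C·w for some eigenvector w of K with eigenvalue λ. -/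
/-
If `D(Y) v = λ D(X) v`, then `D(Y)` maps `span {Re v, Im v}` into its `D(X)`-image; both matrices
are injective, so the two images have the same dimension and this span is symmetric. Maximality
puts `Re v` and `Im v` in `range C`, i.e. `v = C w`, and cancelling the injective `D(X) C` in
`D(Y) C w = D(X) C K w` turns the eigenvalue equation into `K w = λ w`. The factor `K` exists
because `range (D(Y) C) = range (D(X) C)`, and it is invertible because `D(Y) C` is injective.
-/

open Complex Function Matrix

section Factorization

variable {R 𝕜 m k l : Type*} [CommRing R] [Field 𝕜] [Fintype k] [Fintype l] [DecidableEq l]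

theorem Matrix.exists_eq_mul_of_range_le {P : Matrix m k R} {Q : Matrix m l R}
    (h : LinearMap.range Q.mulVecLin ≤ LinearMap.range P.mulVecLin) :
    ∃ A : Matrix k l R, Q = P * A := by
  obtain ⟨F, hF⟩ := Module.projective_lifting_property P.mulVecLin.rangeRestrict
    (Q.mulVecLin.codRestrict _ fun x ↦ h ⟨x, rfl⟩) P.mulVecLin.surjective_rangeRestrict
  refine ⟨LinearMap.toMatrix' F, toLin'.injective (LinearMap.ext fun x ↦ ?_)⟩
  rw [toLin'_apply, toLin'_apply, ← mulVec_mulVec, LinearMap.toMatrix'_mulVec]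
  exact congr_arg Subtype.val (LinearMap.congr_fun hF x).symm

theorem Matrix.mul_left_cancel_of_mulVec_injective {P : Matrix m k R} (hP : Injective P.mulVec)
    {A B : Matrix k l R} (h : P * A = P * B) : A = B :=
  toLin'.injective <| LinearMap.ext fun x ↦ hP <| by
    simpa only [toLin'_apply, mulVec_mulVec] using congr_arg (· *ᵥ x) h

theorem Matrix.isUnit_of_eq_mul [DecidableEq k] {P Q : Matrix m k 𝕜} {A : Matrix k k 𝕜}
    (hQ : Injective Q.mulVec) (h : Q = P * A) : IsUnit A :=
  mulVec_injective_iff_isUnit.1 fun x y hxy ↦ hQ <| by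
    rw [h, ← mulVec_mulVec, ← mulVec_mulVec, hxy]

theorem Matrix.existsUnique_isUnit_eq_mul [DecidableEq k] {P Q : Matrix m k 𝕜}
    (hP : Injective P.mulVec) (hQ : Injective Q.mulVec)
    (h : LinearMap.range Q.mulVecLin ≤ LinearMap.range P.mulVecLin) :
    ∃! A : Matrix k k 𝕜, IsUnit A ∧ Q = P * A :=
  let ⟨A, hA⟩ := exists_eq_mul_of_range_le h
  ⟨A, ⟨isUnit_of_eq_mul hQ hA, hA⟩, fun _ hB ↦ mul_left_cancel_of_mulVec_injective hP (hB.2 ▸ hA)⟩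

end Factorization

theorem Submodule.map_eq_map_of_map_le {𝕜 V W : Type*} [Field 𝕜] [AddCommGroup V] [Module 𝕜 V]
    [FiniteDimensional 𝕜 V] [AddCommGroup W] [Module 𝕜 W] {f g : V →ₗ[𝕜] W}
    (hf : Injective f) (hg : Injective g) {S : Submodule 𝕜 V} (h : S.map g ≤ S.map f) :
    S.map f = S.map g :=
  (eq_of_le_of_finrank_le h <| by
    rw [← (S.equivMapOfInjective f hf).finrank_eq, ← (S.equivMapOfInjective g hg).finrank_eq]).symm

section Complexification

variable {m n k : Type*} [Fintype n]

theorem Complex.re_comp_smul (c : ℂ) (u : m → ℂ) :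
    re ∘ (c • u) = c.re • re ∘ u - c.im • im ∘ u := by
  ext i
  simp

theorem Complex.im_comp_smul (c : ℂ) (u : m → ℂ) :
    im ∘ (c • u) = c.re • im ∘ u + c.im • re ∘ u := by
  ext i
  simp

theorem Complex.ext_comp {u v : m → ℂ} (hre : re ∘ u = re ∘ v) (him : im ∘ u = im ∘ v) : u = v :=
  funext fun i ↦ Complex.ext (congr_fun hre i) (congr_fun him i)

theorem Matrix.re_mulVec_map_ofReal (M : Matrix m n ℝ) (v : n → ℂ) :
    re ∘ (M.map ofReal *ᵥ v) = M *ᵥ (re ∘ v) := by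
  ext i
  simp [mulVec, dotProduct, re_sum]

theorem Matrix.im_mulVec_map_ofReal (M : Matrix m n ℝ) (v : n → ℂ) :
    im ∘ (M.map ofReal *ᵥ v) = M *ᵥ (im ∘ v) := by
  ext i
  simp [mulVec, dotProduct, im_sum]

theorem Matrix.map_ofReal_mul (M : Matrix m n ℝ) (N : Matrix n k ℝ) :
    (M * N).map ofReal = M.map ofReal * N.map ofReal :=
  Matrix.map_mul (f := ofRealHom)

theorem Matrix.mulVec_map_ofReal_injective {M : Matrix m n ℝ} (hM : Injective M.mulVec) :
    Injective (M.map ofReal).mulVec := fun u v huv ↦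
  Complex.ext_comp (hM <| by rw [← re_mulVec_map_ofReal, ← re_mulVec_map_ofReal, huv])
    (hM <| by rw [← im_mulVec_map_ofReal, ← im_mulVec_map_ofReal, huv])

theorem Matrix.exists_eq_mulVec_map_ofReal {M : Matrix m n ℝ} {v : m → ℂ}
    (hre : re ∘ v ∈ LinearMap.range M.mulVecLin) (him : im ∘ v ∈ LinearMap.range M.mulVecLin) :
    ∃ w, v = M.map ofReal *ᵥ w := by
  obtain ⟨p, hp⟩ := hre
  obtain ⟨q, hq⟩ := him
  refine ⟨fun j ↦ ⟨p j, q j⟩, Complex.ext_comp ?_ ?_⟩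
  · rw [re_mulVec_map_ofReal, ← hp]; rfl
  · rw [im_mulVec_map_ofReal, ← hq]; rfl

theorem Matrix.map_span_re_im_le {DX DY : Matrix m n ℝ} {c : ℂ} {v : n → ℂ}
    (h : DY.map ofReal *ᵥ v = c • DX.map ofReal *ᵥ v) :
    (Submodule.span ℝ {re ∘ v, im ∘ v}).map DY.mulVecLin ≤
      (Submodule.span ℝ {re ∘ v, im ∘ v}).map DX.mulVecLin := by
  have hre : DY *ᵥ (re ∘ v) = c.re • DX *ᵥ (re ∘ v) - c.im • DX *ᵥ (im ∘ v) := by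
    rw [← re_mulVec_map_ofReal, h, re_comp_smul, re_mulVec_map_ofReal, im_mulVec_map_ofReal]
  have him : DY *ᵥ (im ∘ v) = c.re • DX *ᵥ (im ∘ v) + c.im • DX *ᵥ (re ∘ v) := by
    rw [← im_mulVec_map_ofReal, h, im_comp_smul, re_mulVec_map_ofReal, im_mulVec_map_ofReal]
  rw [Submodule.map_span, Submodule.map_span, Submodule.span_le, Set.image_pair, Set.image_pair,
    Set.pair_subset_iff]
  simp only [mulVecLin_apply, hre, him]
  set T := Submodule.span ℝ {DX *ᵥ (re ∘ v), DX *ᵥ (im ∘ v)}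
  have ha : DX *ᵥ (re ∘ v) ∈ T := Submodule.subset_span (Set.mem_insert _ _)
  have hb : DX *ᵥ (im ∘ v) ∈ T := Submodule.subset_span (Set.mem_insert_of_mem _ rfl)
  exact ⟨T.sub_mem (T.smul_mem _ ha) (T.smul_mem _ hb),
    T.add_mem (T.smul_mem _ hb) (T.smul_mem _ ha)⟩

theorem Matrix.map_ofReal_mulVec_eq_smul_iff [Fintype k] {DX DY : Matrix m n ℝ}
    {C : Matrix n k ℝ} {K : Matrix k k ℝ} (hK : DY * C = DX * C * K)
    (hinj : Injective (DX * C).mulVec) (c : ℂ) (w : k → ℂ) :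
    DY.map ofReal *ᵥ (C.map ofReal *ᵥ w) = c • DX.map ofReal *ᵥ (C.map ofReal *ᵥ w) ↔
      K.map ofReal *ᵥ w = c • w := by
  rw [← (mulVec_map_ofReal_injective hinj).eq_iff, mulVec_mulVec, mulVec_mulVec, mulVec_smul,
    mulVec_mulVec, ← map_ofReal_mul, ← map_ofReal_mul, ← map_ofReal_mul, hK]

end Complexification

/-- For the maximal symmetric subspace `S*` spanned by the columns of `C`, there is a
unique invertible `K` with `D(Y)C = D(X)C K`, and the nonzero solutions of
`D(Y)v = λ D(X)v` are exactly `v = C w` with `w` an eigenvector of `K` for `λ`. -/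
theorem stmt_18 (N Nd k : ℕ)
    (DX DY : Matrix (Fin N) (Fin Nd) ℝ)
    (hX : Function.Injective DX.mulVecLin) (hY : Function.Injective DY.mulVecLin)
    (Sstar : Submodule ℝ (Fin Nd → ℝ))
    (hsym : Submodule.map DX.mulVecLin Sstar = Submodule.map DY.mulVecLin Sstar)
    (hmax : ∀ S : Submodule ℝ (Fin Nd → ℝ),
      Submodule.map DX.mulVecLin S = Submodule.map DY.mulVecLin S → S ≤ Sstar)
    (C : Matrix (Fin Nd) (Fin k) ℝ) (hC : Function.Injective C.mulVecLin)
    (hCr : LinearMap.range C.mulVecLin = Sstar) :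
    (∃! K : Matrix (Fin k) (Fin k) ℝ, IsUnit K ∧ DY * C = DX * C * K) ∧
    ∀ K : Matrix (Fin k) (Fin k) ℝ, IsUnit K → DY * C = DX * C * K →
      ∀ (lam : ℂ) (v : Fin Nd → ℂ), v ≠ 0 →
        ((DY.map (Complex.ofReal : ℝ → ℂ)).mulVec v
            = lam • (DX.map (Complex.ofReal : ℝ → ℂ)).mulVec v ↔
          ∃ w : Fin k → ℂ, w ≠ 0 ∧
            (K.map (Complex.ofReal : ℝ → ℂ)).mulVec w = lam • w ∧
            v = (C.map (Complex.ofReal : ℝ → ℂ)).mulVec w) := by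
  have hXC : Injective (DX * C).mulVec := by rw [← coe_mulVecLin, mulVecLin_mul]; exact hX.comp hC
  have hYC : Injective (DY * C).mulVec := by rw [← coe_mulVecLin, mulVecLin_mul]; exact hY.comp hC
  have hrange : LinearMap.range (DY * C).mulVecLin ≤ LinearMap.range (DX * C).mulVecLin := by
    rw [mulVecLin_mul, mulVecLin_mul, LinearMap.range_comp, LinearMap.range_comp, hCr, hsym]
  refine ⟨existsUnique_isUnit_eq_mul hXC hYC hrange, fun K _ hK lam v hv ↦ ⟨fun heig ↦ ?_, ?_⟩⟩
  · have hS := hmax _ (Submodule.map_eq_map_of_map_le hX hY (map_span_re_im_le heig))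
    obtain ⟨w, rfl⟩ := exists_eq_mulVec_map_ofReal (v := v)
      (hCr ▸ hS (Submodule.subset_span (Set.mem_insert _ _)))
      (hCr ▸ hS (Submodule.subset_span (Set.mem_insert_of_mem _ rfl)))
    refine ⟨w, ?_, (map_ofReal_mulVec_eq_smul_iff hK hXC lam w).1 heig, rfl⟩
    rintro rfl
    exact hv (mulVec_zero _)
  · rintro ⟨w, -, hw, rfl⟩
    exact (map_ofReal_mulVec_eq_smul_iff hK hXC lam w).2 hw
end

section
/- Let {S_k^i : k ∈ ℕ₀, i ∈ {1,...,M}} be subspaces of ℝ^{N_d} with S_0^i = ℝ^{N_d}, satisfying for each k ≥ 1 and each i: S_k^i ⊆ ⋂_{j ∈ {i} ∪ N_in^k(i)} S_{k-1}^j, where N_in^k(i) are the in-neighbors of i in a (time-varying) digraph G_k. Suppose a fixed subspace S* satisfies S* ⊆ S_k^i for all k, i. If the sequence of digraphs is such that there exists a time l after which all subspaces are constant (S_k^i = S_l^i for k ≥ l) and after time l there is a closed temporal path visiting every node, then S_l^1 = S_l^2 = ⋯ = S_l^M, i.e., all agents' subspaces coincide at equilibrium. -/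
/-- Consensus at equilibrium: if agents' subspaces only shrink along (time-varying)
edges and in time, are constant after time `l`, and after time `l` there is a closed
temporal path visiting every node, then all agents' subspaces coincide at time `l`. -/
theorem stmt_19 (Nd Mn : ℕ)
    (E : ℕ → Fin Mn → Fin Mn → Prop)
    (S : ℕ → Fin Mn → Submodule ℝ (Fin Nd → ℝ))
    (h0 : ∀ i, S 0 i = ⊤)
    (hself : ∀ k i, S (k + 1) i ≤ S k i)
    (hedge : ∀ k i j, E (k + 1) j i → S (k + 1) i ≤ S k j)
    (Sstar : Submodule ℝ (Fin Nd → ℝ)) (hlow : ∀ k i, Sstar ≤ S k i)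
    (l : ℕ) (heq : ∀ k, l ≤ k → ∀ i, S k i = S l i)
    (L : ℕ) (hL : 0 < L) (kt : Fin L → ℕ) (p : Fin L → Fin Mn)
    (hkt : StrictMono kt) (hgt : ∀ t, l < kt t)
    (hcover : ∀ i : Fin Mn, ∃ t, p t = i)
    (hpath : ∀ t : Fin L, E (kt t) (p t) (p ⟨(t.val + 1) % L, Nat.mod_lt _ hL⟩)) :
    ∀ i j : Fin Mn, S l i = S l j := by

  have g : ℕ → Submodule ℝ (Fin Nd → ℝ) := fun n => S l (p ⟨n % L, Nat.mod_lt _ hL⟩)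
  have step : ∀ n, S l (p ⟨(n + 1) % L, Nat.mod_lt _ hL⟩) ≤ S l (p ⟨n % L, Nat.mod_lt _ hL⟩) := by
    intro n
    set t : Fin L := ⟨n % L, Nat.mod_lt _ hL⟩ with ht
    have hpos : 0 < kt t := lt_of_le_of_lt (Nat.zero_le l) (hgt t)
    have hkk : kt t - 1 + 1 = kt t := Nat.succ_pred_eq_of_pos hpos
    have hidx : ((t.val + 1) % L) = (n + 1) % L := Nat.mod_add_mod n L 1
    have hE : E (kt t - 1 + 1) (p t) (p ⟨(n + 1) % L, Nat.mod_lt _ hL⟩) := by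
      rw [hkk]
      have := hpath t
      rwa [show (⟨(t.val + 1) % L, Nat.mod_lt _ hL⟩ : Fin L)
          = ⟨(n + 1) % L, Nat.mod_lt _ hL⟩ from Fin.ext hidx] at this
    have h1 := hedge (kt t - 1) (p ⟨(n + 1) % L, Nat.mod_lt _ hL⟩) (p t) hE
    rw [hkk] at h1
    have hl1 : l ≤ kt t := le_of_lt (hgt t)
    have hl2 : l ≤ kt t - 1 := Nat.le_sub_one_of_lt (hgt t)
    rwa [heq (kt t) hl1, heq (kt t - 1) hl2] at h1
  have hchain : ∀ n m : ℕ, n ≤ m →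
      S l (p ⟨m % L, Nat.mod_lt _ hL⟩) ≤ S l (p ⟨n % L, Nat.mod_lt _ hL⟩) := by
    intro n m h
    induction m, h using Nat.le_induction with
    | base => exact le_rfl
    | succ m hm ih => exact le_trans (step m) ih
  have hL0 : ∀ t : Fin L, S l (p t) = S l (p ⟨0 % L, Nat.mod_lt _ hL⟩) := by
    intro t
    have h1 : S l (p ⟨t.val % L, Nat.mod_lt _ hL⟩) ≤ S l (p ⟨0 % L, Nat.mod_lt _ hL⟩) :=
      hchain 0 t.val (Nat.zero_le _)
    have h2 : S l (p ⟨L % L, Nat.mod_lt _ hL⟩) ≤ S l (p ⟨t.val % L, Nat.mod_lt _ hL⟩) :=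
      hchain t.val L (le_of_lt t.isLt)
    have hfix : (⟨t.val % L, Nat.mod_lt _ hL⟩ : Fin L) = t := Fin.ext (Nat.mod_eq_of_lt t.isLt)
    have hLL : (⟨L % L, Nat.mod_lt _ hL⟩ : Fin L) = ⟨0 % L, Nat.mod_lt _ hL⟩ := by
      apply Fin.ext; simp [Nat.mod_self]
    rw [hfix] at h1 h2
    rw [hLL] at h2
    exact le_antisymm h1 h2
  intro i j
  obtain ⟨ti, hti⟩ := hcover i
  obtain ⟨tj, htj⟩ := hcover j
  rw [← hti, ← htj, hL0 ti, hL0 tj]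
end
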